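/- arXiv:math/0212247 — 3 statements merged into one kernel-verified Lean document; each statement's English description precedes it below -/
import Mathlib

section
/- A permutation π of {1,...,n} satisfies inv(π) = dexc(π) if and only if both the subword of excedance letters and the subword of non-excedance letters of π are increasing. -/
open Finset

def exc {n : ℕ} (π : Equiv.Perm (Fin n)) : ℕ :=
  (univ.filter (fun i => i < π i)).card

def dexc {n : ℕ} (π : Equiv.Perm (Fin n)) : ℕ :=
  ∑ i ∈ univ.filter (fun i => i < π i), ((π i : ℕ) - (i : ℕ))

def inv {n : ℕ} (π : Equiv.Perm (Fin n)) : ℕ :=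
  (univ.filter (fun p : Fin n × Fin n => p.1 < p.2 ∧ π p.2 < π p.1)).card


/-- Both the excedance letter subword and the non-excedance letter subword are increasing. -/
def BiIncreasing {n : ℕ} (π : Equiv.Perm (Fin n)) : Prop :=
  (∀ i j : Fin n, i < j → i < π i → j < π j → π i < π j) ∧
  (∀ i j : Fin n, i < j → π i ≤ i → π j ≤ j → π i < π j)

/-!
Write `inv π = ∑ i, #{j > i | π j < π i}`. Of the `π i` letters smaller than `π i`, at most `i`
sit to the left of position `i`, so the `i`-th summand is at least `π i - i` (truncated), and
summing gives `dexc π ≤ inv π`. Equality therefore holds termwise. At an excedance `i` it says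
that every letter to the left of `i` is smaller than `π i`; at a non-excedance it says that every
letter to the right of `i` is larger than `π i`. Together these are exactly the monotonicity of
the two subwords.
-/

namespace Equiv.Perm

variable {n : ℕ} (π : Perm (Fin n))

def rightInversions (i : Fin n) : Finset (Fin n) := {j | i < j ∧ π j < π i}

def leftSmaller (i : Fin n) : Finset (Fin n) := {j | j < i ∧ π j < π i}

lemma card_leftSmaller_add_card_rightInversions (i : Fin n) :
    #(π.leftSmaller i) + #(π.rightInversions i) = π i := by
  have hsmaller : #({k | π k < π i} : Finset (Fin n)) = π i := by
    rw [← Fin.card_Iio (π i)]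
    exact card_equiv π (by simp)
  have hsplit : ({k | π k < π i} : Finset (Fin n)) = π.leftSmaller i ∪ π.rightInversions i := by
    ext k
    simp only [leftSmaller, rightInversions, mem_union, mem_filter, mem_univ, true_and]
    rcases lt_trichotomy k i with h | rfl | h <;> simp [*, lt_asymm]
  have hdisj : _root_.Disjoint (π.leftSmaller i) (π.rightInversions i) := by
    simp only [leftSmaller, rightInversions, disjoint_left, mem_filter, mem_univ, true_and]
    exact fun k hk hk' => lt_asymm hk.1 hk'.1
  rw [← hsmaller, hsplit, card_union_of_disjoint hdisj]

lemma leftSmaller_subset_Iio (i : Fin n) : π.leftSmaller i ⊆ Iio i := fun k hk => by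
  simp only [leftSmaller, mem_filter] at hk
  simpa using hk.2.1

lemma card_leftSmaller_le (i : Fin n) : #(π.leftSmaller i) ≤ i := by
  simpa using card_le_card (π.leftSmaller_subset_Iio i)

lemma sub_le_card_rightInversions (i : Fin n) : (π i : ℕ) - i ≤ #(π.rightInversions i) := by
  have := π.card_leftSmaller_add_card_rightInversions i
  have := π.card_leftSmaller_le i
  omega

lemma inv_eq_sum_card_rightInversions : inv π = ∑ i, #(π.rightInversions i) := by
  simp only [inv, rightInversions, card_filter, Fintype.sum_prod_type]

lemma dexc_eq_sum_sub : dexc π = ∑ i, ((π i : ℕ) - i) := by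
  refine sum_subset (filter_subset _ _) fun i _ hi => ?_
  simp only [mem_filter, mem_univ, true_and, not_lt] at hi
  exact Nat.sub_eq_zero_of_le (Fin.le_def.mp hi)

lemma inv_eq_dexc_iff_forall_card_rightInversions :
    inv π = dexc π ↔ ∀ i, #(π.rightInversions i) = (π i : ℕ) - i := by
  rw [inv_eq_sum_card_rightInversions, dexc_eq_sum_sub, eq_comm,
    sum_eq_sum_iff_of_le fun i _ => π.sub_le_card_rightInversions i]
  simp only [mem_univ, true_implies, eq_comm]

lemma card_rightInversions_eq_sub_iff_of_lt {i : Fin n} (hi : i < π i) :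
    #(π.rightInversions i) = (π i : ℕ) - i ↔ ∀ k < i, π k < π i := by
  have hsum := π.card_leftSmaller_add_card_rightInversions i
  have hlt : (i : ℕ) < π i := hi
  have hle := π.card_leftSmaller_le i
  calc #(π.rightInversions i) = (π i : ℕ) - i ↔ #(π.leftSmaller i) = #(Iio i) := by
        rw [Fin.card_Iio]; omega
    _ ↔ π.leftSmaller i = Iio i :=
        ⟨fun h => eq_of_subset_of_card_le (π.leftSmaller_subset_Iio i) h.ge, congrArg card⟩
    _ ↔ ∀ k < i, π k < π i := by simp [Finset.ext_iff, leftSmaller]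

lemma card_rightInversions_eq_sub_iff_of_le {i : Fin n} (hi : π i ≤ i) :
    #(π.rightInversions i) = (π i : ℕ) - i ↔ ∀ j, i < j → π i < π j := by
  rw [Nat.sub_eq_zero_of_le (Fin.le_def.mp hi), card_eq_zero, eq_empty_iff_forall_notMem]
  simp only [rightInversions, mem_filter, mem_univ, true_and, not_and, not_lt]
  exact forall₂_congr fun j hij => ⟨fun h => h.lt_of_ne (π.injective.ne hij.ne), le_of_lt⟩

end Equiv.Perm

theorem inv_eq_dexc_iff_biIncreasing {n : ℕ} (π : Equiv.Perm (Fin n)) :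
    inv π = dexc π ↔ BiIncreasing π := by
  rw [π.inv_eq_dexc_iff_forall_card_rightInversions]
  constructor
  · intro h
    exact ⟨fun i j hij _ hj => (π.card_rightInversions_eq_sub_iff_of_lt hj).1 (h j) i hij,
      fun i j hij hi _ => (π.card_rightInversions_eq_sub_iff_of_le hi).1 (h i) j hij⟩
  · rintro ⟨hexc, hnonexc⟩ i
    rcases lt_or_ge i (π i) with hi | hi
    · rw [π.card_rightInversions_eq_sub_iff_of_lt hi]
      intro k hki
      rcases lt_or_ge k (π k) with hk | hk
      · exact hexc k i hki hk hi
      · exact hk.trans_lt (hki.trans hi)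
    · rw [π.card_rightInversions_eq_sub_iff_of_le hi]
      intro j hij
      by_contra! hji
      exact (hnonexc i j hij hi (hji.trans (hi.trans hij.le))).not_ge hji
end

section
/- Let π be a bi-increasing (321-avoiding) permutation of {1,...,n} and k a non-excedance of π. Then the number of non-excedances j with π(k) ≤ j < k equals the number of excedances i with i < π(k) < π(i). -/
open Finset

/-- π avoids the pattern 321. -/
def Avoids321 {n : ℕ} (π : Equiv.Perm (Fin n)) : Prop :=
  ¬ ∃ i j k : Fin n, i < j ∧ j < k ∧ π k < π j ∧ π j < π i

lemma card_filter_apply_lt {n : ℕ} (π : Equiv.Perm (Fin n)) (c : Fin n) :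
    (univ.filter fun m => π m < c).card = (Iio c).card := by
  apply Finset.card_bij (fun m _ => π m)
  · intro a ha
    simp only [mem_filter] at ha
    simpa using ha.2
  · intro a _ b _ hab
    exact π.injective hab
  · intro b hb
    refine ⟨π.symm b, ?_, by simp⟩
    simpa using (mem_Iio.mp hb)

lemma aux_exists {n : ℕ} (π : Equiv.Perm (Fin n)) (p q c : Fin n)
    (hpq : p < q) (hcp : (c : ℕ) ≤ (p : ℕ)) (hqc : π q < c) :
    ∃ m, m < p ∧ c ≤ π m := by
  by_contra hcon
  push_neg at hcon
  have hsub : insert q (Iio p) ⊆ univ.filter fun m => π m < c := by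
    intro m hm
    simp only [mem_insert, mem_Iio] at hm
    simp only [mem_filter, mem_univ, true_and]
    rcases hm with rfl | hm
    · exact hqc
    · exact hcon m hm
  have hcard := Finset.card_le_card hsub
  rw [card_filter_apply_lt] at hcard
  rw [Finset.card_insert_of_notMem (by simp [not_lt.mpr hpq.le])] at hcard
  simp only [Fin.card_Iio] at hcard
  omega

theorem nonexcedance_count_eq_of_avoids321 {n : ℕ} (π : Equiv.Perm (Fin n))
    (h : Avoids321 π) (k : Fin n) (hk : π k ≤ k) :
    (univ.filter (fun j : Fin n => π j ≤ j ∧ π k ≤ j ∧ j < k)).card =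
      (univ.filter (fun i : Fin n => i < π i ∧ i < π k ∧ π k < π i)).card := by
  have hL : univ.filter (fun j : Fin n => π j ≤ j ∧ π k ≤ j ∧ j < k) =
      (univ.filter fun i => π i < π k) \ (univ.filter fun i => i < π k) := by
    ext j
    simp only [mem_filter, mem_sdiff, mem_univ, true_and, not_lt]
    constructor
    · rintro ⟨h1, h2, h3⟩
      refine ⟨?_, h2⟩
      by_contra hge
      push_neg at hge
      have hne : π k ≠ π j := fun he => h3.ne (π.injective he.symm)
      have hlt : π k < π j := lt_of_le_of_ne hge hne
      obtain ⟨m, hm1, hm2⟩ := aux_exists π j k (π j) h3 h1 hlt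
      have hne2 : π j ≠ π m := fun he => hm1.ne (π.injective he.symm)
      exact h ⟨m, j, k, hm1, h3, hlt, lt_of_le_of_ne hm2 hne2⟩
    · rintro ⟨h1, h2⟩
      have hle : π j ≤ j := le_of_lt (lt_of_lt_of_le h1 h2)
      refine ⟨hle, h2, ?_⟩
      by_contra hge
      push_neg at hge
      have hne : j ≠ k := fun he => h1.ne (by rw [he])
      have hlt : k < j := lt_of_le_of_ne hge (Ne.symm hne)
      obtain ⟨m, hm1, hm2⟩ := aux_exists π k j (π k) hlt hk h1
      have hne2 : π k ≠ π m := fun he => hm1.ne (π.injective he.symm)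
      exact h ⟨m, k, j, hm1, hlt, h1, lt_of_le_of_ne hm2 hne2⟩
  have hR : univ.filter (fun i : Fin n => i < π i ∧ i < π k ∧ π k < π i) =
      (univ.filter fun i => i < π k) \ (univ.filter fun i => π i < π k) := by
    ext i
    simp only [mem_filter, mem_sdiff, mem_univ, true_and, not_lt]
    constructor
    · rintro ⟨_, h2, h3⟩
      exact ⟨h2, h3.le⟩
    · rintro ⟨h1, h2⟩
      have hne : i ≠ k := fun he => absurd (he ▸ h1) (lt_irrefl k ∘ fun hx => lt_of_lt_of_le hx hk)
      have hne2 : π k ≠ π i := fun he => hne (π.injective he.symm)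
      have hlt : π k < π i := lt_of_le_of_ne h2 hne2
      exact ⟨lt_trans h1 hlt, h1, hlt⟩
  rw [hL, hR]
  apply Finset.card_sdiff_comm
  rw [card_filter_apply_lt]
  congr 1
  ext i
  simp
end

section
/- The number of 321-avoiding permutations of {1,...,n} with exactly e excedances is the Narayana number N(n,e) = (1/n)·C(n,e)·C(n,e+1). -/
/-!
A 321-avoiding permutation is increasing on its excedances and on its weak non-excedances: if
excedances `i < j` had `π i > π j`, then among the more than `j` positions carrying values below
`π j` one would lie after `j`, completing a 321 pattern. Conversely a permutation increasing on
both classes avoids 321, as two of any three positions lie in the same class. Hence `π ↦ (E, π E)`,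
with `E` the excedance set, is a bijection from 321-avoiding permutations onto the pairs `(E, V)`
of equinumerous sets in which the `i`-th element of `E` is below the `i`-th element of `V` for
every `i`; the inverse maps `E` increasingly onto `V` and the complement increasingly onto the
complement. Removing the largest point of the ground set gives a Pascal-type recursion for the
number of these pairs, solved by `C(n, e) C(n - 1, e) - C(n, e + 1) C(n - 1, e - 1)`, which is
`C(n, e) C(n, e + 1) / n`.
-/

open Finset

open Equiv

theorem card_filter_compl_add_card_filter {α : Type*} [Fintype α] [DecidableEq α] (s : Finset α)
    (p : α → Prop) [DecidablePred p] : #{x ∈ sᶜ | p x} + #{x ∈ s | p x} = #{x | p x} := by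
  rw [← card_union_of_disjoint (disjoint_filter_filter disjoint_compl_left), ← filter_union,
    union_comm, union_compl]

section StrictlyBelow

variable {α : Type*} [LinearOrder α] {s t : Finset α} {f : α → α} {a m : α}

/-- When `#s = #t`, this says that for every `i` the `i`-th smallest element of `s` is smaller
than the `i`-th smallest element of `t`. -/
def StrictlyBelow (s t : Finset α) : Prop :=
  ∀ x, #{b ∈ t | b ≤ x} ≤ #{a ∈ s | a < x}

theorem StrictlyBelow.card_le (h : StrictlyBelow s t) : #t ≤ #s := by
  obtain rfl | ht := t.eq_empty_or_nonempty
  · exact (card_empty).trans_le (Nat.zero_le _)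
  calc #t = #{b ∈ t | b ≤ t.max' ht} := by rw [filter_true_of_mem fun b hb ↦ le_max' t b hb]
    _ ≤ #{a ∈ s | a < t.max' ht} := h _
    _ ≤ #s := card_filter_le _ _

theorem StrictlyBelow.exists_lt (h : StrictlyBelow s t) {b : α} (hb : b ∈ t) : ∃ a ∈ s, a < b := by
  have : 0 < #{a ∈ s | a < b} := (card_pos.2 ⟨b, by simp [hb]⟩).trans_le (h b)
  obtain ⟨a, ha⟩ := card_pos.1 this
  exact ⟨a, (mem_filter.1 ha).1, (mem_filter.1 ha).2⟩

theorem strictlyBelow_image (hf : ∀ a ∈ s, a < f a) : StrictlyBelow s (s.image f) := by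
  intro x
  calc #{b ∈ s.image f | b ≤ x} ≤ #({a ∈ s | a < x}.image f) := by
        refine card_le_card fun b hb ↦ ?_
        obtain ⟨a, ha, rfl⟩ := mem_image.1 (mem_filter.1 hb).1
        exact mem_image_of_mem f (mem_filter.2 ⟨ha, (hf a ha).trans_le (mem_filter.1 hb).2⟩)
    _ ≤ #{a ∈ s | a < x} := card_image_le

theorem card_filter_lt_lt_card_filter_le {c : α} (ha : a ∈ s) (hc : c ≤ a) :
    #{x ∈ s | x < c} < #{x ∈ s | x ≤ a} := by
  refine card_lt_card ((ssubset_iff_of_subset ?_).2 ⟨a, by simp [ha], by simp [hc]⟩)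
  exact monotone_filter_right s fun x _ hx ↦ (hx.trans_le hc).le

theorem lt_apply_of_strictlyBelow (hf : StrictMonoOn f s) (h : StrictlyBelow s (s.image f))
    (ha : a ∈ s) : a < f a := by
  by_contra! hfa
  have hle : #{x ∈ s | x ≤ a} ≤ #{b ∈ s.image f | b ≤ f a} := by
    refine card_le_card_of_injOn f (fun x hx ↦ ?_)
      (hf.injOn.mono fun x hx ↦ (mem_filter.1 (mem_coe.1 hx)).1)
    simp only [coe_filter, Set.mem_ofPred_eq] at hx ⊢
    exact ⟨mem_image_of_mem f hx.1, hf.monotoneOn hx.1 ha hx.2⟩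
  have := card_filter_lt_lt_card_filter_le ha hfa
  have := h (f a)
  omega

theorem apply_le_of_card_filter_le (hf : StrictMonoOn f s)
    (h : ∀ y, #{x ∈ s | x ≤ y} ≤ #{b ∈ s.image f | b ≤ y}) (ha : a ∈ s) : f a ≤ a := by
  by_contra! haf
  have hle : #{b ∈ s.image f | b ≤ a} ≤ #{x ∈ s | x < a} := by
    refine (card_le_card fun b hb ↦ ?_).trans (card_image_le (f := f))
    obtain ⟨⟨x, hx, rfl⟩, hxa⟩ : (∃ x ∈ s, f x = b) ∧ b ≤ a := by simpa using hb
    exact mem_image_of_mem f (mem_filter.2 ⟨hx, (hf.lt_iff_lt hx ha).1 (hxa.trans_lt haf)⟩)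
  have := card_filter_lt_lt_card_filter_le ha le_rfl
  have := h a
  omega

theorem strictlyBelow_iff_erase_max (hs : ∀ x ∈ s, x ≤ m) (ht : ∀ x ∈ t, x ≤ m) :
    StrictlyBelow s t ↔ StrictlyBelow (s.erase m) (t.erase m) ∧ #t ≤ #(s.erase m) := by
  have below : ∀ x < m, #{b ∈ t.erase m | b ≤ x} = #{b ∈ t | b ≤ x} ∧
      #{a ∈ s.erase m | a < x} = #{a ∈ s | a < x} := fun x hx ↦ by
    simp only [filter_erase]
    exact ⟨by rw [erase_eq_of_notMem (by simp [hx])], by rw [erase_eq_of_notMem (by simp [hx.le])]⟩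
  have erase_eq : s.erase m = {a ∈ s | a < m} := by
    ext a
    simp only [mem_erase, mem_filter]
    constructor
    · rintro ⟨hne, ha⟩; exact ⟨ha, lt_of_le_of_ne (hs a ha) hne⟩
    · rintro ⟨ha, hlt⟩; exact ⟨hlt.ne, ha⟩
  constructor
  · intro h
    have hcard : #t ≤ #(s.erase m) := by
      simpa [filter_true_of_mem ht, ← erase_eq] using h m
    refine ⟨fun x ↦ ?_, hcard⟩
    rcases lt_or_ge x m with hx | hx
    · rw [(below x hx).1, (below x hx).2]; exact h x
    · calc #{b ∈ t.erase m | b ≤ x} ≤ #t := (card_filter_le _ _).trans (card_erase_le)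
        _ ≤ #(s.erase m) := hcard
        _ = #{a ∈ s.erase m | a < x} := by
          rw [filter_true_of_mem fun a ha ↦ ?_]
          exact (lt_of_le_of_ne (hs a (mem_of_mem_erase ha)) (ne_of_mem_erase ha)).trans_le hx
  · rintro ⟨h, hcard⟩ x
    rcases lt_or_ge x m with hx | hx
    · rw [← (below x hx).1, ← (below x hx).2]; exact h x
    · calc #{b ∈ t | b ≤ x} ≤ #t := card_filter_le _ _
        _ ≤ #(s.erase m) := hcard
        _ ≤ #{a ∈ s | a < x} := by
          rw [erase_eq]
          exact card_le_card (monotone_filter_right s fun a _ ha ↦ ha.trans_le hx)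

theorem StrictlyBelow.card_filter_compl_le [Fintype α]
    (h : StrictlyBelow s t) (y : α) : #{x ∈ sᶜ | x ≤ y} ≤ #{x ∈ tᶜ | x ≤ y} := by
  have hs := card_filter_compl_add_card_filter s (· ≤ y)
  have ht := card_filter_compl_add_card_filter t (· ≤ y)
  have hst : #{x ∈ t | x ≤ y} ≤ #{x ∈ s | x ≤ y} :=
    (h y).trans (card_le_card (monotone_filter_right s fun _ _ hx ↦ hx.le))
  omega

end StrictlyBelow

theorem StrictMonoOn.eqOn_of_image_eq {α β : Type*} [LinearOrder α] [WellFoundedLT α] [Preorder β]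
    {s : Set α} {f g : α → β} (hf : StrictMonoOn f s) (hg : StrictMonoOn g s)
    (h : f '' s = g '' s) : s.EqOn f g := fun x hx ↦
  congrFun ((hf.domRestrict.range_inj hg.domRestrict).1 (by simpa [Set.range_domRestrict] using h))
    ⟨x, hx⟩

section Permutations

variable {n : ℕ} {π σ : Perm (Fin n)}

theorem card_filter_apply_lt_s16 (π : Perm (Fin n)) (c : Fin n) : #{k | π k < c} = c := by
  rw [← Fin.card_Iio]
  exact card_equiv π fun k ↦ by simp

theorem card_filter_lt_apply (π : Perm (Fin n)) (c : Fin n) : #{k | c < π k} = n - 1 - c := by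
  rw [← Fin.card_Ioi]
  exact card_equiv π fun k ↦ by simp

theorem Avoids321.strictMonoOn_excedances (hπ : Avoids321 π) : StrictMonoOn π {i | i < π i} := by
  intro i hi j (hj : j < π j) hij
  by_contra! hji
  replace hji : π j < π i := hji.lt_of_ne (π.injective.ne hij.ne')
  obtain ⟨k, hk, hk'⟩ := exists_mem_notMem_of_card_lt_card (s := (Iio j).erase i)
    (t := {k | π k < π j}) (by
      rw [card_filter_apply_lt_s16, card_erase_of_mem (mem_Iio.2 hij), Fin.card_Iio]
      exact lt_of_le_of_lt (Nat.sub_le _ _) hj)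
  rw [mem_filter] at hk
  have hki : k ≠ i := by rintro rfl; exact lt_asymm hk.2 hji
  have hjk : j < k := lt_of_le_of_ne (by simpa [hki] using hk')
    (by rintro rfl; exact lt_irrefl _ hk.2)
  exact hπ ⟨i, j, k, hij, hjk, hk.2, hji⟩

theorem Avoids321.strictMonoOn_nonexcedances (hπ : Avoids321 π) :
    StrictMonoOn π {i | π i ≤ i} := by
  intro i (hi : π i ≤ i) j hj hij
  by_contra! hji
  replace hji : π j < π i := hji.lt_of_ne (π.injective.ne hij.ne')
  obtain ⟨k, hk, hk'⟩ := exists_mem_notMem_of_card_lt_card (s := (Ioi i).erase j)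
    (t := {k | π i < π k}) (by
      rw [card_filter_lt_apply, card_erase_of_mem (mem_Ioi.2 hij), Fin.card_Ioi]
      have : (i : ℕ) < j := hij
      have : (π i : ℕ) ≤ i := hi
      omega)
  rw [mem_filter] at hk
  have hkj : k ≠ j := by rintro rfl; exact lt_asymm hk.2 hji
  have hki : k < i := lt_of_not_ge fun hik ↦ hk' (by
    simpa [hkj] using lt_of_le_of_ne hik (by rintro rfl; exact lt_irrefl _ hk.2))
  exact hπ ⟨k, i, j, hki, hij, hji, hk.2⟩

theorem avoids321_of_strictMonoOn (h₁ : StrictMonoOn π {i | i < π i})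
    (h₂ : StrictMonoOn π {i | π i ≤ i}) : Avoids321 π := by
  have same_class : ∀ a b, a < b → (a < π a ↔ b < π b) → π a < π b := fun a b hab hiff ↦ by
    by_cases ha : a < π a
    · exact h₁ ha (hiff.1 ha) hab
    · exact h₂ (not_lt.1 ha) (not_lt.1 (mt hiff.2 ha)) hab
  rintro ⟨i, j, k, hij, hjk, hkj, hji⟩
  by_cases hij' : i < π i ↔ j < π j
  · exact lt_asymm hji (same_class i j hij hij')
  by_cases hjk' : j < π j ↔ k < π k
  · exact lt_asymm hkj (same_class j k hjk hjk')
  exact lt_asymm (hkj.trans hji) (same_class i k (hij.trans hjk) (by tauto))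

def excedances (π : Perm (Fin n)) : Finset (Fin n) := {i | i < π i}

@[simp] theorem mem_excedances {i : Fin n} : i ∈ excedances π ↔ i < π i := by
  simp [excedances]

@[simp] theorem coe_excedances : (excedances π : Set (Fin n)) = {i | i < π i} := by
  ext; simp

theorem Avoids321.eq_of_excedances_eq (hπ : Avoids321 π) (hσ : Avoids321 σ)
    (hE : excedances π = excedances σ)
    (hV : (excedances π).image π = (excedances σ).image σ) : π = σ := by
  have hE' : {i | i < π i} = {i | i < σ i} := by rw [← coe_excedances, hE, coe_excedances]
  have hV' : π '' {i | i < π i} = σ '' {i | i < π i} := by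
    simpa only [coe_image, coe_excedances, ← hE'] using
      congrArg (fun s : Finset (Fin n) ↦ (s : Set (Fin n))) hV
  have hN : {i | π i ≤ i} = {i | σ i ≤ i} := by
    ext i; simpa [not_lt] using (Set.ext_iff.1 hE' i).not
  have hN' : π '' {i | π i ≤ i} = σ '' {i | π i ≤ i} := by
    have hc : {i | π i ≤ i} = {i | i < π i}ᶜ := by ext; simp
    rw [hc, Set.image_compl_eq π.bijective, Set.image_compl_eq σ.bijective, hV']
  ext1 i
  rcases lt_or_ge i (π i) with hi | hi
  · exact (hπ.strictMonoOn_excedances.eqOn_of_image_eq (hE' ▸ hσ.strictMonoOn_excedances) hV') hi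
  · exact (hπ.strictMonoOn_nonexcedances.eqOn_of_image_eq (hN ▸ hσ.strictMonoOn_nonexcedances)
      hN') hi

theorem exists_avoids321 {E V : Finset (Fin n)} (hcard : #E = #V) (h : StrictlyBelow E V) :
    ∃ π : Perm (Fin n), Avoids321 π ∧ excedances π = E ∧ (excedances π).image π = V := by
  have hcard' : Fintype.card {x // x ∉ E} = Fintype.card {x // x ∉ V} := by
    simp [Fintype.card_subtype_compl, hcard]
  let g : {x // x ∈ E} ≃o {x // x ∈ V} := (E.orderIsoOfFin hcard).symm.trans (V.orderIsoOfFin rfl)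
  let g' : {x // x ∉ E} ≃o {x // x ∉ V} :=
    (Fintype.orderIsoFinOfCardEq _ hcard').symm.trans (Fintype.orderIsoFinOfCardEq _ rfl)
  let π : Perm (Fin n) := Equiv.subtypeCongr g.toEquiv g'.toEquiv
  have hπE : ∀ x (hx : x ∈ E), π x = g ⟨x, hx⟩ := fun x hx ↦ by
    simp [π, Equiv.subtypeCongr, hx]
  have hπN : ∀ x (hx : x ∉ E), π x = g' ⟨x, hx⟩ := fun x hx ↦ by
    simp [π, Equiv.subtypeCongr, hx]
  have monoE : StrictMonoOn π E := fun x hx y hy hxy ↦ by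
    rw [hπE x hx, hπE y hy]; exact g.strictMono hxy
  have monoN : StrictMonoOn π ↑Eᶜ := fun x hx y hy hxy ↦ by
    rw [hπN x (by simpa using hx), hπN y (by simpa using hy)]; exact g'.strictMono hxy
  have imageE : E.image π = V := by
    refine eq_of_subset_of_card_le (fun y hy ↦ ?_)
      (by rw [card_image_of_injective _ π.injective, hcard])
    obtain ⟨x, hx, rfl⟩ := mem_image.1 hy
    rw [hπE x hx]; exact (g _).2
  have imageN : Eᶜ.image π = Vᶜ := by
    refine eq_of_subset_of_card_le (fun y hy ↦ ?_)
      (by rw [card_image_of_injective _ π.injective, card_compl, card_compl, hcard])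
    obtain ⟨x, hx, rfl⟩ := mem_image.1 hy
    rw [hπN x (by simpa using hx)]; simpa using (g' _).2
  have hexc : excedances π = E := by
    ext x
    rw [mem_excedances]
    by_cases hx : x ∈ E
    · exact iff_of_true (lt_apply_of_strictlyBelow monoE (imageE ▸ h) hx) hx
    · refine iff_of_false (not_lt.2 (apply_le_of_card_filter_le monoN (fun y ↦ ?_) (by simpa))) hx
      rw [imageN]; exact h.card_filter_compl_le y
  refine ⟨π, avoids321_of_strictMonoOn ?_ ?_, hexc, hexc ▸ imageE⟩
  · rwa [← coe_excedances, hexc]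
  · have : {i | π i ≤ i} = ↑Eᶜ := by simp [← hexc, Set.ext_iff]
    rwa [this]

end Permutations

theorem mem_powersetCard_insert_iff {α : Type*} [DecidableEq α] {s u : Finset α} {m : α} {a : ℕ}
    {x : Bool} (hx : decide (m ∈ u) = x) :
    u ∈ (insert m s).powersetCard (a + x.toNat) ↔ u.erase m ∈ s.powersetCard a := by
  cases x
  · replace hx : m ∉ u := by simpa using hx
    simp [mem_powersetCard, subset_insert_iff_of_notMem hx, erase_eq_of_notMem hx]
  · replace hx : m ∈ u := by simpa using hx
    have := card_pos.2 ⟨m, hx⟩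
    simp only [mem_powersetCard, subset_insert_iff, card_erase_of_mem hx, Bool.toNat_true]
    exact and_congr_right fun _ ↦ by omega

theorem erase_cond_insert {α : Type*} [DecidableEq α] {u : Finset α} {m : α} (hmu : m ∉ u)
    (x : Bool) : (cond x (insert m u) u).erase m = u ∧ decide (m ∈ cond x (insert m u) u) = x := by
  cases x <;> simp [hmu]

section Counting

variable {α : Type*} [LinearOrder α] {s : Finset α} {m : α}

open Classical in
noncomputable def domPairs (s : Finset α) (a b : ℕ) : Finset (Finset α × Finset α) :=
  {p ∈ s.powersetCard a ×ˢ s.powersetCard b | StrictlyBelow p.1 p.2}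

theorem mem_domPairs {a b : ℕ} {p : Finset α × Finset α} :
    p ∈ domPairs s a b ↔
      p.1 ∈ s.powersetCard a ∧ p.2 ∈ s.powersetCard b ∧ StrictlyBelow p.1 p.2 := by
  simp [domPairs, and_assoc]

theorem card_domPairs_zero_right (s : Finset α) (a : ℕ) : #(domPairs s a 0) = (#s).choose a := by
  have : domPairs s a 0 = s.powersetCard a ×ˢ {∅} := by
    ext ⟨u, v⟩
    simp only [mem_domPairs, powersetCard_zero, mem_product, mem_singleton]
    exact ⟨fun h ↦ ⟨h.1, h.2.1⟩, fun ⟨hu, hv⟩ ↦ ⟨hu, hv, by simp [hv, StrictlyBelow]⟩⟩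
  rw [this, card_product, card_singleton, card_powersetCard, mul_one]

theorem domPairs_singleton (m : α) (a : ℕ) {b : ℕ} (hb : b ≠ 0) : domPairs {m} a b = ∅ := by
  refine eq_empty_of_forall_notMem fun ⟨u, v⟩ hp ↦ ?_
  obtain ⟨hu, hv, huv⟩ := mem_domPairs.1 hp
  rw [mem_powersetCard] at hu hv
  obtain ⟨y, hy⟩ := card_ne_zero.1 (hv.2.trans_ne hb)
  obtain ⟨x, hx, hxy⟩ := huv.exists_lt hy
  rw [mem_singleton.1 (hu.1 hx), mem_singleton.1 (hv.1 hy)] at hxy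
  exact lt_irrefl m hxy

theorem card_domPairs_insert_fiber (hm : ∀ x ∈ s, x < m) (a b : ℕ) (x y : Bool) :
    #{p ∈ domPairs (insert m s) (a + x.toNat) (b + y.toNat) |
        (decide (m ∈ p.1), decide (m ∈ p.2)) = (x, y)} =
      if b + y.toNat ≤ a then #(domPairs s a b) else 0 := by
  have hms : m ∉ s := fun h ↦ lt_irrefl m (hm m h)
  have le_top : ∀ u ⊆ insert m s, ∀ z ∈ u, z ≤ m := fun u hu z hz ↦ by
    rcases mem_insert.1 (hu hz) with rfl | hz
    exacts [le_rfl, (hm z hz).le]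
  rw [← card_empty, ← apply_ite card, ← filter_const]
  refine card_nbij' (fun p ↦ (p.1.erase m, p.2.erase m))
    (fun q ↦ (cond x (insert m q.1) q.1, cond y (insert m q.2) q.2)) ?_ ?_ ?_ ?_
  · rintro ⟨u, v⟩ hp
    simp only [coe_filter, mem_domPairs, Prod.mk.injEq, Set.mem_ofPred_eq] at hp ⊢
    obtain ⟨⟨hu, hv, huv⟩, hxu, hyv⟩ := hp
    have hu' := (mem_powersetCard_insert_iff hxu).1 hu
    have hv' := (mem_powersetCard_insert_iff hyv).1 hv
    obtain ⟨huv', hcard⟩ := (strictlyBelow_iff_erase_max (le_top u (mem_powersetCard.1 hu).1)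
      (le_top v (mem_powersetCard.1 hv).1)).1 huv
    rw [(mem_powersetCard.1 hv).2, (mem_powersetCard.1 hu').2] at hcard
    exact ⟨⟨hu', hv', huv'⟩, hcard⟩
  · rintro ⟨u, v⟩ hq
    simp only [coe_filter, mem_domPairs, Prod.mk.injEq, Set.mem_ofPred_eq] at hq ⊢
    obtain ⟨⟨hu, hv, huv⟩, hcard⟩ := hq
    have hmu : m ∉ u := fun h ↦ hms ((mem_powersetCard.1 hu).1 h)
    have hmv : m ∉ v := fun h ↦ hms ((mem_powersetCard.1 hv).1 h)
    obtain ⟨erase_u, hxu⟩ := erase_cond_insert hmu x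
    obtain ⟨erase_v, hyv⟩ := erase_cond_insert hmv y
    have hu' := (mem_powersetCard_insert_iff hxu).2 (erase_u ▸ hu)
    have hv' := (mem_powersetCard_insert_iff hyv).2 (erase_v ▸ hv)
    refine ⟨⟨hu', hv', ?_⟩, hxu, hyv⟩
    rw [strictlyBelow_iff_erase_max (le_top _ (mem_powersetCard.1 hu').1)
      (le_top _ (mem_powersetCard.1 hv').1), erase_u, erase_v, (mem_powersetCard.1 hv').2,
      (mem_powersetCard.1 hu).2]
    exact ⟨huv, hcard⟩
  · rintro ⟨u, v⟩ hp
    simp only [coe_filter, Prod.mk.injEq, Set.mem_ofPred_eq] at hp ⊢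
    obtain ⟨-, hxu, hyv⟩ := hp
    constructor
    · cases x <;> simp_all
    · cases y <;> simp_all
  · rintro ⟨u, v⟩ hq
    simp only [coe_filter, mem_domPairs, mem_powersetCard, Set.mem_ofPred_eq] at hq
    exact Prod.ext (erase_cond_insert (fun h ↦ hms (hq.1.1.1 h)) x).1
      (erase_cond_insert (fun h ↦ hms (hq.1.2.1.1 h)) y).1

theorem card_domPairs_insert (hm : ∀ x ∈ s, x < m) {a b : ℕ} (hba : b ≤ a) :
    #(domPairs (insert m s) (a + 1) (b + 1)) =
      #(domPairs s (a + 1) (b + 1)) + #(domPairs s (a + 1) b) +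
        if b + 1 ≤ a then #(domPairs s a (b + 1)) + #(domPairs s a b) else 0 := by
  rw [card_eq_sum_card_fiberwise (f := fun p ↦ (decide (m ∈ p.1), decide (m ∈ p.2)))
    (t := univ) fun _ _ ↦ mem_coe.2 (mem_univ _), Fintype.sum_prod_type, Fintype.sum_bool,
    Fintype.sum_bool, Fintype.sum_bool]
  have h₁₁ := card_domPairs_insert_fiber hm a b true true
  have h₁₀ := card_domPairs_insert_fiber hm a (b + 1) true false
  have h₀₁ := card_domPairs_insert_fiber hm (a + 1) b false true
  have h₀₀ := card_domPairs_insert_fiber hm (a + 1) (b + 1) false false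
  simp only [Bool.toNat_true, Bool.toNat_false, add_zero] at h₁₁ h₁₀ h₀₁ h₀₀
  simp only [h₁₁, h₁₀, h₀₁, h₀₀, show b + 1 ≤ a + 1 by omega, if_true]
  split_ifs <;> omega

-- With `k = #s` this is `C(k, a) C(k - 1, b) - C(k, a + 1) C(k - 1, b - 1)`; the last factor is
-- written as `C(k, b) - C(k - 1, b)` so that it vanishes at `b = 0`, where `b - 1` truncates.
theorem card_domPairs (s : Finset α) {a b : ℕ} (hba : b ≤ a) :
    (#(domPairs s a b) : ℤ) = ((#s).choose a * (#s - 1).choose b : ℕ) -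
      ((#s).choose (a + 1) : ℤ) * ((#s).choose b - (#s - 1).choose b : ℤ) := by
  induction s using Finset.induction_on_max generalizing a b with
  | empty =>
    rcases b with _ | c
    · simp [card_domPairs_zero_right]
    · obtain ⟨d, rfl⟩ : ∃ d, a = d + 1 := Nat.exists_eq_add_one_of_ne_zero (by omega)
      simp +contextual [domPairs]
  | insert m s hm ih =>
    rcases b with _ | c
    · simp [card_domPairs_zero_right]
    obtain ⟨d, rfl⟩ : ∃ d, a = d + 1 := Nat.exists_eq_add_one_of_ne_zero (by omega)
    have hms : m ∉ s := fun h ↦ lt_irrefl m (hm m h)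
    rw [card_insert_of_notMem hms]
    rcases s.eq_empty_or_nonempty with rfl | hs
    · simp [domPairs_singleton, Nat.choose_eq_zero_of_lt]
    obtain ⟨j, hj⟩ := Nat.exists_eq_add_one_of_ne_zero (card_pos.2 hs).ne'
    rw [card_domPairs_insert hm (by omega)]
    simp only [hj, Nat.add_sub_cancel] at ih ⊢
    have I₁ := ih (a := d + 1) (b := c + 1) hba
    have I₂ := ih (a := d + 1) (b := c) (by omega)
    split_ifs with h
    · have I₃ := ih (a := d) (b := c + 1) h
      have I₄ := ih (a := d) (b := c) (by omega)
      push_cast [Nat.choose_succ_succ'] at I₁ I₂ I₃ I₄ ⊢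
      linear_combination I₁ + I₂ + I₃ + I₄
    · obtain rfl : d = c := by omega
      push_cast [Nat.choose_succ_succ'] at I₁ I₂ ⊢
      linear_combination I₁ + I₂

end Counting

theorem narayana_identity (m e : ℕ) :
    ((m + 1 : ℕ) : ℤ) * (((m + 1).choose e * m.choose e : ℕ) -
      ((m + 1).choose (e + 1) : ℤ) * ((m + 1).choose e - m.choose e : ℤ)) =
      ((m + 1).choose e * (m + 1).choose (e + 1) : ℕ) := by
  rcases e with _ | c
  · simp
  have h₁ := congrArg (Nat.cast : ℕ → ℤ) (Nat.add_one_mul_choose_eq m (c + 1))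
  have h₂ := congrArg (Nat.cast : ℕ → ℤ) (Nat.add_one_mul_choose_eq m c)
  push_cast [Nat.choose_succ_succ'] at h₁ h₂ ⊢
  linear_combination (m.choose c + m.choose (c + 1) : ℤ) * h₁ -
    (m.choose (c + 1) + m.choose (c + 2) : ℤ) * h₂

open scoped Classical in
theorem card_avoids321_eq_card_domPairs (n e : ℕ) :
    #{π : Perm (Fin n) | Avoids321 π ∧ #{i | i < π i} = e} =
      #(domPairs (univ : Finset (Fin n)) e e) := by
  refine card_bij (fun π _ ↦ (excedances π, (excedances π).image π)) ?_ ?_ ?_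
  · intro π hπ
    obtain ⟨-, -, hcard⟩ := mem_filter.1 hπ
    refine mem_domPairs.2 ⟨mem_powersetCard.2 ⟨subset_univ _, hcard⟩, mem_powersetCard.2
      ⟨subset_univ _, (card_image_of_injective _ π.injective).trans hcard⟩,
      strictlyBelow_image fun i hi ↦ mem_excedances.1 hi⟩
  · intro π hπ σ hσ h
    rw [mem_filter] at hπ hσ
    exact hπ.2.1.eq_of_excedances_eq hσ.2.1 (Prod.ext_iff.1 h).1 (Prod.ext_iff.1 h).2
  · rintro ⟨E, V⟩ hp
    obtain ⟨hE, hV, hEV⟩ := mem_domPairs.1 hp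
    rw [mem_powersetCard] at hE hV
    obtain ⟨π, hπ, hexc, himg⟩ := exists_avoids321 (hE.2.trans hV.2.symm) hEV
    refine ⟨π, mem_filter.2 ⟨mem_univ _, hπ, ?_⟩, Prod.ext hexc himg⟩
    rw [← hE.2, ← hexc]
    rfl

open scoped Classical in
theorem narayana_count (n e : ℕ) (hn : 0 < n) :
    n * (univ.filter (fun π : Equiv.Perm (Fin n) =>
        Avoids321 π ∧ (univ.filter (fun i => i < π i)).card = e)).card =
      Nat.choose n e * Nat.choose n (e + 1) := by
  obtain ⟨m, rfl⟩ := Nat.exists_eq_add_one_of_ne_zero hn.ne'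
  rw [card_avoids321_eq_card_domPairs]
  have := card_domPairs (univ : Finset (Fin (m + 1))) (le_refl e)
  rw [card_univ, Fintype.card_fin, Nat.add_sub_cancel] at this
  zify
  rw [this]
  exact_mod_cast narayana_identity m e
end
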